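/- arXiv:1208.2654 — 2 statements merged into one kernel-verified Lean document; each statement's English description precedes it below -/
import Mathlib

section
/- If a pWF net N and a disjoint tWF net M are both substitution-sound and t is a transition of N, then N ⊗_t M is substitution-sound. -/
structure Net where
  P : Finset ℕ
  T : Finset ℕ
  F : Finset (ℕ × ℕ)
  I : Finset ℕ
  O : Finset ℕ

namespace Net

def nodes (N : Net) : Finset ℕ := N.P ∪ N.T

def IsPetri (N : Net) : Prop :=
  Disjoint N.P N.T ∧ ∀ e ∈ N.F, (e.1 ∈ N.P ∧ e.2 ∈ N.T) ∨ (e.1 ∈ N.T ∧ e.2 ∈ N.P)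

def edge (N : Net) (x y : ℕ) : Prop := (x, y) ∈ N.F

def pathReach (N : Net) : ℕ → ℕ → Prop := Relation.ReflTransGen N.edge

def Connected (N : Net) : Prop :=
  (∀ x ∈ N.nodes, ∃ i ∈ N.I, N.pathReach i x) ∧
  (∀ x ∈ N.nodes, ∃ o ∈ N.O, N.pathReach x o)

/-- place workflow net -/
def IsPWF (N : Net) : Prop :=
  N.IsPetri ∧ N.I ⊆ N.P ∧ N.O ⊆ N.P ∧ N.I.Nonempty ∧ N.O.Nonempty ∧ N.Connected

/-- transition workflow net -/
def IsTWF (N : Net) : Prop :=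
  N.IsPetri ∧ N.I ⊆ N.T ∧ N.O ⊆ N.T ∧ N.I.Nonempty ∧ N.O.Nonempty ∧ N.Connected

def IsWF (N : Net) : Prop := N.IsPWF ∨ N.IsTWF

abbrev Marking := ℕ → ℕ

def pre (N : Net) (t : ℕ) : Marking := fun p => if (p, t) ∈ N.F then 1 else 0
def post (N : Net) (t : ℕ) : Marking := fun p => if (t, p) ∈ N.F then 1 else 0
def enabled (N : Net) (t : ℕ) (m : Marking) : Prop := t ∈ N.T ∧ N.pre t ≤ m
def fire (N : Net) (t : ℕ) (m : Marking) : Marking := fun p => m p - N.pre t p + N.post t p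
def stepRel (N : Net) (m m' : Marking) : Prop := ∃ t, N.enabled t m ∧ m' = N.fire t m
def reach (N : Net) : Marking → Marking → Prop := Relation.ReflTransGen N.stepRel

/-- the marking with `k` tokens on each element of `S` -/
def bag (k : ℕ) (S : Finset ℕ) : Marking := fun p => if p ∈ S then k else 0

def kSound (N : Net) (k : ℕ) : Prop :=
  ∀ m, N.reach (bag k N.I) m → N.reach m (bag k N.O)

def starSound (N : Net) : Prop := ∀ k, 1 ≤ k → N.kSound k

def subSound (N : Net) : Prop :=
  ∀ k k' : ℕ, k' ≤ k → ∀ m : Marking,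
    N.reach (bag k N.I) (m + bag k' N.O) → N.reach m (bag (k - k') N.O)

/-- place completion of a tWF net -/
def pc (N : Net) (pi po : ℕ) : Net where
  P := insert pi (insert po N.P)
  T := N.T
  F := (N.I.image fun t => (pi, t)) ∪ (N.O.image fun t => (t, po)) ∪ N.F
  I := {pi}
  O := {po}

/-- transition completion of a pWF net -/
def tc (N : Net) (t_i t_o : ℕ) : Net where
  P := N.P
  T := insert t_i (insert t_o N.T)
  F := (N.I.image fun p => (t_i, p)) ∪ (N.O.image fun p => (p, t_o)) ∪ N.F
  I := {t_i}
  O := {t_o}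

/-- *-soundness of a tWF net: its place completion (for fresh names) is *-sound -/
def tStarSound (N : Net) : Prop :=
  ∀ pi po : ℕ, pi ∉ N.nodes → po ∉ N.nodes → pi ≠ po → (N.pc pi po).starSound

/-- sub-soundness of a tWF net: its place completion (for fresh names) is sub-sound -/
def tSubSound (N : Net) : Prop :=
  ∀ pi po : ℕ, pi ∉ N.nodes → po ∉ N.nodes → pi ≠ po → (N.pc pi po).subSound

/-- preset of a node, as a finset -/
def inEdges (N : Net) (n : ℕ) : Finset ℕ := (N.F.filter fun e => e.2 = n).image Prod.fst
/-- postset of a node, as a finset -/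
def outEdges (N : Net) (n : ℕ) : Finset ℕ := (N.F.filter fun e => e.1 = n).image Prod.snd

/-- substitution of the node `n` of `N` by the net `M` (place or transition substitution,
depending on the type of `n`): each input node of `M` inherits the preset of `n`, each
output node of `M` inherits the postset of `n`. -/
def subst (N : Net) (n : ℕ) (M : Net) : Net where
  P := (N.P.erase n) ∪ M.P
  T := (N.T.erase n) ∪ M.T
  F := (N.F.filter fun e => e.1 ≠ n ∧ e.2 ≠ n) ∪ M.F
        ∪ (N.inEdges n ×ˢ M.I) ∪ (M.O ×ˢ N.outEdges n)
  I := if n ∈ N.I then (N.I.erase n) ∪ M.I else N.I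
  O := if n ∈ N.O then (N.O.erase n) ∪ M.O else N.O

def Acyclic (N : Net) : Prop := ∀ x, ¬ Relation.TransGen N.edge x x

/-- AND net condition (on top of being a WF net) -/
def IsAND (N : Net) : Prop :=
  N.Acyclic ∧ ∀ p ∈ N.P,
    ((p ∈ N.I ∧ (N.inEdges p).card = 0) ∨ (p ∉ N.I ∧ (N.inEdges p).card = 1)) ∧
    ((p ∈ N.O ∧ (N.outEdges p).card = 0) ∨ (p ∉ N.O ∧ (N.outEdges p).card = 1))

/-- OR net condition (on top of being a WF net) -/
def IsOR (N : Net) : Prop :=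
  ∀ t ∈ N.T,
    ((t ∈ N.I ∧ (N.inEdges t).card = 0) ∨ (t ∉ N.I ∧ (N.inEdges t).card = 1)) ∧
    ((t ∈ N.O ∧ (N.outEdges t).card = 0) ∨ (t ∉ N.O ∧ (N.outEdges t).card = 1))

end Net
section SubstAux
open Net

lemma mem_inEdges {N : Net} {x n : ℕ} : x ∈ N.inEdges n ↔ (x, n) ∈ N.F := by
  constructor
  · intro h
    simp only [Net.inEdges, Finset.mem_image, Finset.mem_filter] at h
    obtain ⟨e, ⟨he, h2⟩, h1⟩ := h
    have : e = (x, n) := by cases e; simp_all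
    rwa [this] at he
  · intro h
    simp only [Net.inEdges, Finset.mem_image, Finset.mem_filter]
    exact ⟨(x, n), ⟨h, rfl⟩, rfl⟩

lemma mem_outEdges {N : Net} {x n : ℕ} : x ∈ N.outEdges n ↔ (n, x) ∈ N.F := by
  constructor
  · intro h
    simp only [Net.outEdges, Finset.mem_image, Finset.mem_filter] at h
    obtain ⟨e, ⟨he, h2⟩, h1⟩ := h
    have : e = (n, x) := by cases e; simp_all
    rwa [this] at he
  · intro h
    simp only [Net.outEdges, Finset.mem_image, Finset.mem_filter]
    exact ⟨(n, x), ⟨h, rfl⟩, rfl⟩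

lemma mem_substF {N M : Net} {t x y : ℕ} :
    (x, y) ∈ (N.subst t M).F ↔
      ((x, y) ∈ N.F ∧ x ≠ t ∧ y ≠ t) ∨ (x, y) ∈ M.F ∨
        ((x, t) ∈ N.F ∧ y ∈ M.I) ∨ (x ∈ M.O ∧ (t, y) ∈ N.F) := by
  simp only [Net.subst, Finset.mem_union, Finset.mem_filter, Finset.mem_product,
    mem_inEdges, mem_outEdges]
  tauto

lemma mem_pcF {M : Net} {pi po x y : ℕ} :
    (x, y) ∈ (M.pc pi po).F ↔
      (x = pi ∧ y ∈ M.I) ∨ (x ∈ M.O ∧ y = po) ∨ (x, y) ∈ M.F := by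
  simp only [Net.pc, Finset.mem_union, Finset.mem_image, Prod.mk.injEq]
  constructor
  · rintro ((⟨a, ha, h1, h2⟩ | ⟨a, ha, h1, h2⟩) | h) <;> subst_vars <;> tauto
  · rintro (⟨rfl, h⟩ | ⟨h, rfl⟩ | h)
    · exact Or.inl (Or.inl ⟨y, h, rfl, rfl⟩)
    · exact Or.inl (Or.inr ⟨x, h, rfl, rfl⟩)
    · exact Or.inr h

structure SCtx (N M : Net) (t pi po : ℕ) : Prop where
  hNp : N.IsPetri
  hNI : N.I ⊆ N.P
  hNO : N.O ⊆ N.P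
  hMp : M.IsPetri
  hMI : M.I ⊆ M.T
  hMO : M.O ⊆ M.T
  hd : Disjoint N.nodes M.nodes
  ht : t ∈ N.T
  hpiN : pi ∉ N.nodes
  hpoN : po ∉ N.nodes
  hpiM : pi ∉ M.nodes
  hpoM : po ∉ M.nodes
  hpipo : pi ≠ po

set_option linter.unusedSectionVars false

namespace SCtx

variable {N M : Net} {t pi po : ℕ} (C : SCtx N M t pi po)
include C

lemma nm {x : ℕ} (h : x ∈ N.nodes) : x ∉ M.nodes := Finset.disjoint_left.mp C.hd h

lemma NF_nodes {x y : ℕ} (h : (x, y) ∈ N.F) : x ∈ N.nodes ∧ y ∈ N.nodes := by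
  rcases C.hNp.2 _ h with ⟨h1, h2⟩ | ⟨h1, h2⟩ <;>
    exact ⟨Finset.mem_union.mpr (by tauto), Finset.mem_union.mpr (by tauto)⟩

lemma MF_nodes {x y : ℕ} (h : (x, y) ∈ M.F) : x ∈ M.nodes ∧ y ∈ M.nodes := by
  rcases C.hMp.2 _ h with ⟨h1, h2⟩ | ⟨h1, h2⟩ <;>
    exact ⟨Finset.mem_union.mpr (by tauto), Finset.mem_union.mpr (by tauto)⟩

lemma NP_nodes {x : ℕ} (h : x ∈ N.P) : x ∈ N.nodes := Finset.mem_union_left _ h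
lemma NT_nodes {x : ℕ} (h : x ∈ N.T) : x ∈ N.nodes := Finset.mem_union_right _ h
lemma MP_nodes {x : ℕ} (h : x ∈ M.P) : x ∈ M.nodes := Finset.mem_union_left _ h
lemma MT_nodes {x : ℕ} (h : x ∈ M.T) : x ∈ M.nodes := Finset.mem_union_right _ h

/-- an N.F-edge into a transition of N comes from a place of N -/
lemma NF_intoT {x u : ℕ} (hu : u ∈ N.T) (h : (x, u) ∈ N.F) : x ∈ N.P := by
  rcases C.hNp.2 _ h with ⟨h1, h2⟩ | ⟨h1, h2⟩
  · exact h1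
  · exact absurd hu (Finset.disjoint_left.mp C.hNp.1 h2)

lemma NF_fromT {x u : ℕ} (hu : u ∈ N.T) (h : (u, x) ∈ N.F) : x ∈ N.P := by
  rcases C.hNp.2 _ h with ⟨h1, h2⟩ | ⟨h1, h2⟩
  · exact absurd hu (Finset.disjoint_left.mp C.hNp.1 h1)
  · exact h2

lemma MF_intoT {x u : ℕ} (hu : u ∈ M.T) (h : (x, u) ∈ M.F) : x ∈ M.P := by
  rcases C.hMp.2 _ h with ⟨h1, h2⟩ | ⟨h1, h2⟩
  · exact h1
  · exact absurd hu (Finset.disjoint_left.mp C.hMp.1 h2)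

lemma MF_fromT {x u : ℕ} (hu : u ∈ M.T) (h : (u, x) ∈ M.F) : x ∈ M.P := by
  rcases C.hMp.2 _ h with ⟨h1, h2⟩ | ⟨h1, h2⟩
  · exact absurd hu (Finset.disjoint_left.mp C.hMp.1 h1)
  · exact h2

/-- pre in the substituted net, for a transition of M -/
lemma preR_M {u : ℕ} (hu : u ∈ M.T) (x : ℕ) :
    (N.subst t M).pre u x =
      (if (x, u) ∈ M.F then 1 else 0) + (if u ∈ M.I then N.pre t x else 0) := by
  have huN : u ∉ N.nodes := fun h => C.nm h (C.MT_nodes hu)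
  have h1 : ¬((x, u) ∈ N.F ∧ x ≠ t ∧ u ≠ t) := fun ⟨h, _, _⟩ => huN (C.NF_nodes h).2
  have h4 : ¬(x ∈ M.O ∧ (t, u) ∈ N.F) := fun ⟨_, h⟩ => huN (C.NF_nodes h).2
  simp only [Net.pre, mem_substF, h1, h4, or_false, false_or]
  by_cases hMF : (x, u) ∈ M.F
  · have hxM : x ∈ M.P := C.MF_intoT hu hMF
    have hxt : (x, t) ∉ N.F := fun h => C.nm (C.NF_nodes h).1 (C.MP_nodes hxM)
    simp [hMF, hxt]
  · by_cases hI : u ∈ M.I <;> by_cases hxt : (x, t) ∈ N.F <;> simp [hMF, hI, hxt]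

lemma postR_M {u : ℕ} (hu : u ∈ M.T) (x : ℕ) :
    (N.subst t M).post u x =
      (if (u, x) ∈ M.F then 1 else 0) + (if u ∈ M.O then N.post t x else 0) := by
  have huN : u ∉ N.nodes := fun h => C.nm h (C.MT_nodes hu)
  have h1 : ¬((u, x) ∈ N.F ∧ u ≠ t ∧ x ≠ t) := fun ⟨h, _, _⟩ => huN (C.NF_nodes h).1
  have h3 : ¬((u, t) ∈ N.F ∧ x ∈ M.I) := fun ⟨h, _⟩ => huN (C.NF_nodes h).1
  simp only [Net.post, mem_substF, h1, h3, or_false, false_or]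
  by_cases hMF : (u, x) ∈ M.F
  · have hxM : x ∈ M.P := C.MF_fromT hu hMF
    have hxt : (t, x) ∉ N.F := fun h => C.nm (C.NF_nodes h).2 (C.MP_nodes hxM)
    simp [hMF, hxt]
  · by_cases hO : u ∈ M.O <;> by_cases hxt : (t, x) ∈ N.F <;> simp [hMF, hO, hxt]

/-- pre in the place completion, for a transition of M -/
lemma prepc_M {u : ℕ} (hu : u ∈ M.T) (x : ℕ) :
    (M.pc pi po).pre u x =
      (if (x, u) ∈ M.F then 1 else 0) + (if u ∈ M.I ∧ x = pi then 1 else 0) := by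
  have hupo : u ≠ po := fun h => C.hpoM (h ▸ C.MT_nodes hu)
  have h2 : ¬(x ∈ M.O ∧ u = po) := fun ⟨_, h⟩ => hupo h
  simp only [Net.pre, mem_pcF, h2, false_or]
  by_cases hMF : (x, u) ∈ M.F
  · have hxM : x ∈ M.P := C.MF_intoT hu hMF
    have hxpi : x ≠ pi := fun h => C.hpiM (h ▸ C.MP_nodes hxM)
    simp [hMF, hxpi]
  · by_cases hxpi : x = pi
    · subst hxpi; by_cases hI : u ∈ M.I <;> simp [hMF, hI]
    · by_cases hI : u ∈ M.I <;> simp [hMF, hI, hxpi]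

lemma postpc_M {u : ℕ} (hu : u ∈ M.T) (x : ℕ) :
    (M.pc pi po).post u x =
      (if (u, x) ∈ M.F then 1 else 0) + (if u ∈ M.O ∧ x = po then 1 else 0) := by
  have hupi : u ≠ pi := fun h => C.hpiM (h ▸ C.MT_nodes hu)
  have h1 : ¬(u = pi ∧ x ∈ M.I) := fun ⟨h, _⟩ => hupi h
  simp only [Net.post, mem_pcF, h1, false_or]
  by_cases hMF : (u, x) ∈ M.F
  · have hxM : x ∈ M.P := C.MF_fromT hu hMF
    have hxpo : x ≠ po := fun h => C.hpoM (h ▸ C.MP_nodes hxM)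
    simp [hMF, hxpo]
  · by_cases hxpo : x = po
    · subst hxpo; by_cases hO : u ∈ M.O <;> simp [hMF, hO]
    · by_cases hO : u ∈ M.O <;> simp [hMF, hO, hxpo]

/-- pre/post in the substituted net, for a transition of N other than t -/
lemma preR_N {u : ℕ} (hu : u ∈ N.T) (hut : u ≠ t) : (N.subst t M).pre u = N.pre u := by
  funext x
  have huM : u ∉ M.nodes := C.nm (C.NT_nodes hu)
  have h2 : (x, u) ∉ M.F := fun h => huM (C.MF_nodes h).2
  have h3 : ¬((x, t) ∈ N.F ∧ u ∈ M.I) := fun ⟨_, h⟩ => huM (C.MT_nodes (C.hMI h))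
  have h4 : ¬(x ∈ M.O ∧ (t, u) ∈ N.F) := by
    rintro ⟨_, h⟩
    rcases C.hNp.2 _ h with ⟨h1, _⟩ | ⟨_, h2⟩
    · exact Finset.disjoint_left.mp C.hNp.1 h1 C.ht
    · exact Finset.disjoint_left.mp C.hNp.1 h2 hu
  simp only [Net.pre, mem_substF, h2, h3, h4, or_false]
  by_cases hNF : (x, u) ∈ N.F
  · have hxt : x ≠ t := by
      intro h; subst h
      exact Finset.disjoint_left.mp C.hNp.1 (C.NF_intoT hu hNF) C.ht
    simp [hNF, hxt, hut]
  · simp [hNF]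

lemma postR_N {u : ℕ} (hu : u ∈ N.T) (hut : u ≠ t) : (N.subst t M).post u = N.post u := by
  funext x
  have huM : u ∉ M.nodes := C.nm (C.NT_nodes hu)
  have h2 : (u, x) ∉ M.F := fun h => huM (C.MF_nodes h).1
  have h3 : ¬((u, t) ∈ N.F ∧ x ∈ M.I) := by
    rintro ⟨h, _⟩
    rcases C.hNp.2 _ h with ⟨_, h2⟩ | ⟨h1, _⟩
    · exact Finset.disjoint_left.mp C.hNp.1 (C.NF_fromT hu h) C.ht
    · exact Finset.disjoint_left.mp C.hNp.1 (C.NF_fromT hu h) C.ht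
  have h4 : ¬(u ∈ M.O ∧ (t, x) ∈ N.F) := fun ⟨h, _⟩ => huM (C.MT_nodes (C.hMO h))
  simp only [Net.post, mem_substF, h2, h3, h4, or_false]
  by_cases hNF : (u, x) ∈ N.F
  · have hxt : x ≠ t := by
      intro h; subst h
      exact Finset.disjoint_left.mp C.hNp.1 (C.NF_fromT hu hNF) C.ht
    simp [hNF, hxt, hut]
  · simp [hNF]

lemma preN_supp {u x : ℕ} (hu : u ∈ N.T) (h : N.pre u x ≠ 0) : x ∈ N.P := by
  simp only [Net.pre] at h
  split at h
  · exact C.NF_intoT hu ‹_›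
  · omega

lemma postN_supp {u x : ℕ} (hu : u ∈ N.T) (h : N.post u x ≠ 0) : x ∈ N.P := by
  simp only [Net.post] at h
  split at h
  · exact C.NF_fromT hu ‹_›
  · omega

lemma pre_t_pi : N.pre t pi = 0 := by
  simp only [Net.pre, if_neg (fun h : (pi, t) ∈ N.F => C.hpiN (C.NF_nodes h).1)]

lemma post_t_pi : N.post t pi = 0 := by
  simp only [Net.post, if_neg (fun h : (t, pi) ∈ N.F => C.hpiN (C.NF_nodes h).2)]

lemma pre_t_po : N.pre t po = 0 := by
  simp only [Net.pre, if_neg (fun h : (po, t) ∈ N.F => C.hpoN (C.NF_nodes h).1)]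

lemma post_t_po : N.post t po = 0 := by
  simp only [Net.post, if_neg (fun h : (t, po) ∈ N.F => C.hpoN (C.NF_nodes h).2)]

end SCtx

def Phi (N M : Net) (t pi po : ℕ) (q z : Net.Marking) : Net.Marking :=
  fun x => if x ∈ M.P then q x else z x + q pi * N.pre t x + q po * N.post t x

lemma mle {f g : Net.Marking} (h : f ≤ g) (x : ℕ) : f x ≤ g x := h x

lemma reach_fire {N : Net} {u : ℕ} {m : Net.Marking} (h : N.enabled u m) :
    N.reach m (N.fire u m) := Relation.ReflTransGen.single ⟨u, h, rfl⟩

namespace SCtx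

variable {N M : Net} {t pi po : ℕ} (C : SCtx N M t pi po)
include C

lemma preN_MP {u x : ℕ} (hu : u ∈ N.T) (hx : x ∈ M.P) : N.pre u x = 0 := by
  by_contra h
  exact C.nm (C.NP_nodes (C.preN_supp hu h)) (C.MP_nodes hx)

lemma postN_MP {u x : ℕ} (hu : u ∈ N.T) (hx : x ∈ M.P) : N.post u x = 0 := by
  by_contra h
  exact C.nm (C.NP_nodes (C.postN_supp hu h)) (C.MP_nodes hx)

lemma preN_notNP {u x : ℕ} (hu : u ∈ N.T) (hx : x ∉ N.P) : N.pre u x = 0 := by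
  by_contra h; exact hx (C.preN_supp hu h)

lemma postN_notNP {u x : ℕ} (hu : u ∈ N.T) (hx : x ∉ N.P) : N.post u x = 0 := by
  by_contra h; exact hx (C.postN_supp hu h)

lemma MF_not_into_MP {u x : ℕ} (hu : u ∈ M.T) (hx : x ∉ M.P) : (x, u) ∉ M.F :=
  fun h => hx (C.MF_intoT hu h)

lemma MF_not_from_MP {u x : ℕ} (hu : u ∈ M.T) (hx : x ∉ M.P) : (u, x) ∉ M.F :=
  fun h => hx (C.MF_fromT hu h)

lemma pi_not_MP : pi ∉ M.P := fun h => C.hpiM (C.MP_nodes h)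
lemma po_not_MP : po ∉ M.P := fun h => C.hpoM (C.MP_nodes h)

lemma sim_step {q q' : Net.Marking} (h : (M.pc pi po).stepRel q q') (z : Net.Marking) :
    (N.subst t M).stepRel (Phi N M t pi po q z) (Phi N M t pi po q' z) := by
  obtain ⟨u, ⟨huT, hpre⟩, rfl⟩ := h
  have huM : u ∈ M.T := huT
  -- if u is an input transition, then q pi ≥ 1
  have hqpi : u ∈ M.I → 1 ≤ q pi := by
    intro hI
    have := mle hpre pi
    rw [C.prepc_M huM pi, if_neg (C.MF_not_into_MP huM C.pi_not_MP),
      if_pos ⟨hI, rfl⟩] at this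
    omega
  refine ⟨u, ⟨Finset.mem_union_right _ huM, ?_⟩, ?_⟩
  · -- enabledness
    intro x
    rw [C.preR_M huM x]
    by_cases hx : x ∈ M.P
    · have h1 := mle hpre x
      rw [C.prepc_M huM x] at h1
      have h2 : N.pre t x = 0 := C.preN_MP C.ht hx
      simp only [Phi, if_pos hx, h2]
      split_ifs at h1 ⊢ <;> omega
    · rw [if_neg (C.MF_not_into_MP huM hx)]
      simp only [Phi, if_neg hx]
      by_cases hI : u ∈ M.I
      · have h1 := hqpi hI
        have h2 : N.pre t x ≤ q pi * N.pre t x := by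
          calc N.pre t x = 1 * N.pre t x := (one_mul _).symm
          _ ≤ q pi * N.pre t x := Nat.mul_le_mul_right _ h1
        simp only [hI, if_true]
        omega
      · simp [hI]
  · -- fire equality
    funext x
    simp only [Net.fire, Phi]
    by_cases hx : x ∈ M.P
    · have hxpi : ¬(x = pi) := fun h => C.pi_not_MP (h ▸ hx)
      have hxpo : ¬(x = po) := fun h => C.po_not_MP (h ▸ hx)
      rw [if_pos hx, C.prepc_M huM x, C.postpc_M huM x, C.preR_M huM x, C.postR_M huM x,
        if_pos hx, C.preN_MP C.ht hx, C.postN_MP C.ht hx]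
      simp [hxpi, hxpo]
    · rw [if_neg hx, if_neg hx, C.preR_M huM x, C.postR_M huM x,
      if_neg (C.MF_not_into_MP huM hx), if_neg (C.MF_not_from_MP huM hx)]
      have hfpi : q pi - (M.pc pi po).pre u pi + (M.pc pi po).post u pi
          = q pi - (if u ∈ M.I then 1 else 0) := by
        simp only [C.prepc_M huM pi, C.postpc_M huM pi,
          if_neg (C.MF_not_into_MP huM C.pi_not_MP), if_neg (C.MF_not_from_MP huM C.pi_not_MP)]
        have : ¬(u ∈ M.O ∧ pi = po) := fun h => C.hpipo h.2
        simp only [if_neg this]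
        by_cases hI : u ∈ M.I <;> simp [hI]
      have hfpo : q po - (M.pc pi po).pre u po + (M.pc pi po).post u po
          = q po + (if u ∈ M.O then 1 else 0) := by
        simp only [C.prepc_M huM po, C.postpc_M huM po,
          if_neg (C.MF_not_into_MP huM C.po_not_MP), if_neg (C.MF_not_from_MP huM C.po_not_MP)]
        have : ¬(u ∈ M.I ∧ po = pi) := fun h => C.hpipo h.2.symm
        simp only [if_neg this]
        by_cases hO : u ∈ M.O <;> simp [hO]
      rw [hfpi, hfpo]
      clear hfpi hfpo
      by_cases hI : u ∈ M.I <;> by_cases hO : u ∈ M.O <;>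
        simp only [hI, hO, if_true, if_false, Nat.add_zero, Nat.zero_add, Nat.sub_zero]
      all_goals
        first
        | omega
        | (simp only [add_mul, one_mul]; omega)
        | (have h1 := hqpi hI
           obtain ⟨i, hi⟩ : ∃ i, q pi = i + 1 := ⟨q pi - 1, by omega⟩
           rw [hi]
           simp only [Nat.add_sub_cancel, add_mul, one_mul]
           first
           | omega
           | (have h2 : N.pre t x ≤ z x + (i * N.pre t x + N.pre t x) + q po * N.post t x := by
                omega
              omega))

lemma sim_reach {q q' : Net.Marking} (h : (M.pc pi po).reach q q') (z : Net.Marking) :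
    (N.subst t M).reach (Phi N M t pi po q z) (Phi N M t pi po q' z) := by
  induction h with
  | refl => exact Relation.ReflTransGen.refl
  | tail _ hstep ih => exact ih.tail (C.sim_step hstep z)

end SCtx

def psiM (M : Net) (y : Net.Marking) : Net.Marking := fun x => if x ∈ M.P then y x else 0
def phiN (N : Net) (y : Net.Marking) : Net.Marking := fun x => if x ∈ N.P then y x else 0

namespace SCtx

variable {N M : Net} {t pi po : ℕ} (C : SCtx N M t pi po)
include C

lemma NP_not_MP {x : ℕ} (hx : x ∈ N.P) : x ∉ M.P :=
  fun h => C.nm (C.NP_nodes hx) (C.MP_nodes h)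

lemma po_mono {q q' : Net.Marking} (h : (M.pc pi po).reach q q') : q po ≤ q' po := by
  induction h with
  | refl => exact le_refl _
  | @tail q1 q2 _ hstep ih =>
    obtain ⟨u, ⟨huT, _⟩, rfl⟩ := hstep
    have huM : u ∈ M.T := huT
    have h1 : (M.pc pi po).pre u po = 0 := by
      rw [C.prepc_M huM po, if_neg (C.MF_not_into_MP huM C.po_not_MP)]
      have : ¬(u ∈ M.I ∧ po = pi) := fun h => C.hpipo h.2.symm
      rw [if_neg this]
    have h2 : (M.pc pi po).fire u q1 po
        = q1 po - (M.pc pi po).pre u po + (M.pc pi po).post u po := rfl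
    rw [h2, h1]
    omega

lemma proj (hpc : (M.pc pi po).subSound) {k : ℕ} {y : Net.Marking}
    (h : (N.subst t M).reach (Net.bag k N.I) y) :
    ∃ a b : ℕ, b ≤ a ∧
      (∀ A, (M.pc pi po).reach (Net.bag (a + A) {pi})
        (fun x => psiM M y x + Net.bag A {pi} x + Net.bag b {po} x)) ∧
      N.reach (Net.bag k N.I) (fun x => phiN N y x + (a - b) * N.post t x) := by
  induction h with
  | refl =>
    refine ⟨0, 0, le_refl 0, fun A => ?_, ?_⟩
    · have he : (fun x => psiM M (Net.bag k N.I) x + Net.bag A {pi} x + Net.bag 0 {po} x)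
          = Net.bag (0 + A) {pi} := by
        funext x
        simp only [psiM, Net.bag, Finset.mem_singleton, Nat.zero_add]
        by_cases hx : x ∈ M.P
        · have hxI : x ∉ N.I := fun hh => C.nm (C.NP_nodes (C.hNI hh)) (C.MP_nodes hx)
          have hxpi : ¬ x = pi := fun hh => C.hpiM (hh ▸ C.MP_nodes hx)
          simp [hx, hxI, hxpi]
        · simp [hx]
      rw [he]
      exact Relation.ReflTransGen.refl
    · have he : (fun x => phiN N (Net.bag k N.I) x + (0 - 0) * N.post t x)
          = Net.bag k N.I := by
        funext x
        simp only [phiN, Net.bag]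
        by_cases hx : x ∈ N.P
        · simp [hx]
        · have hxI : x ∉ N.I := fun hh => hx (C.hNI hh)
          simp [hx, hxI]
      rw [he]
      exact Relation.ReflTransGen.refl
  | @tail y1 y2 hmid hstep ih =>
    obtain ⟨a, b, hba, hpcr, hNr⟩ := ih
    obtain ⟨u, ⟨huT, hupre⟩, rfl⟩ := hstep
    rcases Finset.mem_union.mp huT with huN | huM
    · -- a transition of N other than t
      obtain ⟨hut, huT'⟩ := Finset.mem_erase.mp huN
      have hps : psiM M ((N.subst t M).fire u y1) = psiM M y1 := by
        funext x
        simp only [psiM]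
        by_cases hx : x ∈ M.P
        · simp only [Net.fire, C.preR_N huT' hut, C.postR_N huT' hut,
            C.preN_MP huT' hx, C.postN_MP huT' hx, if_pos hx]
          omega
        · simp [hx]
      have hph : ∀ x, x ∈ N.P →
          phiN N ((N.subst t M).fire u y1) x = y1 x - N.pre u x + N.post u x := by
        intro x hx
        simp only [phiN, Net.fire, C.preR_N huT' hut, C.postR_N huT' hut, if_pos hx]
      refine ⟨a, b, hba, fun A => ?_, ?_⟩
      · have he : (fun x => psiM M ((N.subst t M).fire u y1) x
            + Net.bag A {pi} x + Net.bag b {po} x)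
            = (fun x => psiM M y1 x + Net.bag A {pi} x + Net.bag b {po} x) := by
          rw [hps]
        rw [he]; exact hpcr A
      · have hen : N.enabled u (fun x => phiN N y1 x + (a - b) * N.post t x) := by
          refine ⟨huT', Pi.le_def.mpr fun x => ?_⟩
          by_cases hx : x ∈ N.P
          · have h1 := mle hupre x
            rw [C.preR_N huT' hut] at h1
            simp only [phiN, if_pos hx]
            omega
          · rw [C.preN_notNP huT' hx]
            omega
        have h2 := hNr.tail ⟨u, hen, rfl⟩
        have he : N.fire u (fun x => phiN N y1 x + (a - b) * N.post t x)
            = (fun x => phiN N ((N.subst t M).fire u y1) x + (a - b) * N.post t x) := by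
          funext x
          by_cases hx : x ∈ N.P
          · have h1 := mle hupre x
            rw [C.preR_N huT' hut] at h1
            simp only [Net.fire, C.preR_N huT' hut, C.postR_N huT' hut, phiN, if_pos hx]
            omega
          · simp only [Net.fire, C.preR_N huT' hut, C.postR_N huT' hut, phiN, if_neg hx,
              C.preN_notNP huT' hx, C.postN_notNP huT' hx]
            omega
        rw [← he]; exact h2
    · -- a transition of M
      have hRpre : ∀ x, (N.subst t M).pre u x
          = (if (x, u) ∈ M.F then 1 else 0) + (if u ∈ M.I then N.pre t x else 0) :=
        C.preR_M huM
      have hRpost : ∀ x, (N.subst t M).post u x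
          = (if (u, x) ∈ M.F then 1 else 0) + (if u ∈ M.O then N.post t x else 0) :=
        C.postR_M huM
      -- the new pc run
      have hpcnew : ∀ A, (M.pc pi po).reach
          (Net.bag (a + (if u ∈ M.I then 1 else 0) + A) {pi})
          (fun x => psiM M ((N.subst t M).fire u y1) x + Net.bag A {pi} x
            + Net.bag (b + (if u ∈ M.O then 1 else 0)) {po} x) := by
        intro A
        have h0 := hpcr ((if u ∈ M.I then 1 else 0) + A)
        have harith : a + ((if u ∈ M.I then 1 else 0) + A)
            = a + (if u ∈ M.I then 1 else 0) + A := by omega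
        rw [harith] at h0
        refine h0.tail ⟨u, ⟨huM, Pi.le_def.mpr fun x => ?_⟩, ?_⟩
        · rw [C.prepc_M huM x]
          by_cases hMF : (x, u) ∈ M.F
          · have hx : x ∈ M.P := C.MF_intoT huM hMF
            have h1 := mle hupre x
            rw [hRpre x, if_pos hMF] at h1
            have hxpi : ¬ x = pi := fun hh => C.hpiM (hh ▸ C.MP_nodes hx)
            simp only [psiM, Net.bag, Finset.mem_singleton, if_pos hx, if_neg hxpi,
              if_pos hMF]
            have : ¬(u ∈ M.I ∧ x = pi) := fun h => hxpi h.2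
            rw [if_neg this]
            omega
          · rw [if_neg hMF]
            by_cases hxpi : x = pi
            · subst hxpi
              simp only [Net.bag, Finset.mem_singleton, if_pos rfl, psiM,
                if_neg C.pi_not_MP]
              by_cases hI : u ∈ M.I <;> simp [hI] <;> omega
            · have : ¬(u ∈ M.I ∧ x = pi) := fun h => hxpi h.2
              rw [if_neg this]
              omega
        · funext x
          have hfq : (M.pc pi po).fire u (fun x => psiM M y1 x
                + Net.bag ((if u ∈ M.I then 1 else 0) + A) {pi} x + Net.bag b {po} x) x
              = (psiM M y1 x + Net.bag ((if u ∈ M.I then 1 else 0) + A) {pi} x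
                + Net.bag b {po} x) - (M.pc pi po).pre u x + (M.pc pi po).post u x := rfl
          rw [hfq, C.prepc_M huM x, C.postpc_M huM x]
          clear hfq
          by_cases hx : x ∈ M.P
          · have hxpi : ¬ x = pi := fun hh => C.hpiM (hh ▸ C.MP_nodes hx)
            have hxpo : ¬ x = po := fun hh => C.hpoM (hh ▸ C.MP_nodes hx)
            have e1 : ¬(u ∈ M.I ∧ x = pi) := fun h => hxpi h.2
            have e2 : ¬(u ∈ M.O ∧ x = po) := fun h => hxpo h.2
            simp only [psiM, Net.bag, Finset.mem_singleton, if_pos hx, if_neg hxpi,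
              if_neg hxpo, if_neg e1, if_neg e2, Net.fire, hRpre x, hRpost x,
              C.preN_MP C.ht hx, C.postN_MP C.ht hx, ite_self]
            omega
          · rw [if_neg (C.MF_not_into_MP huM hx), if_neg (C.MF_not_from_MP huM hx)]
            by_cases hxpi : x = pi
            · have e2 : ¬(u ∈ M.O ∧ x = po) := fun h => C.hpipo (hxpi.symm.trans h.2)
              have hpipo' : ¬ (pi : ℕ) = po := C.hpipo
              rw [if_neg e2]
              simp only [psiM, Net.bag, Finset.mem_singleton, if_neg hx,
                if_neg C.pi_not_MP, hxpi, eq_self_iff_true, and_true, if_true,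
                if_pos rfl, if_neg hpipo']
              by_cases hI : u ∈ M.I <;> simp [hI] <;> omega
            · by_cases hxpo : x = po
              · have e1 : ¬(u ∈ M.I ∧ x = pi) := fun h => C.hpipo (h.2.symm.trans hxpo)
                have hpopi : ¬ (po : ℕ) = pi := fun h => C.hpipo h.symm
                rw [if_neg e1]
                simp only [psiM, Net.bag, Finset.mem_singleton, if_neg hx,
                  if_neg C.po_not_MP, hxpo, eq_self_iff_true, and_true, if_true,
                  if_pos rfl, if_neg hpopi]
                by_cases hO : u ∈ M.O <;> simp [hO] <;> omega
              · have e1 : ¬(u ∈ M.I ∧ x = pi) := fun h => hxpi h.2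
                have e2 : ¬(u ∈ M.O ∧ x = po) := fun h => hxpo h.2
                simp only [psiM, Net.bag, Finset.mem_singleton, if_neg hx,
                  if_neg hxpi, if_neg hxpo, if_neg e1, if_neg e2]
      -- the counting invariant
      have hdob : b + (if u ∈ M.O then 1 else 0) ≤ a + (if u ∈ M.I then 1 else 0) := by
        by_cases hO : u ∈ M.O
        · by_cases hI : u ∈ M.I
          · simp [hI, hO]; omega
          · simp only [hO, hI, if_true, if_false]
            by_contra hcon
            have hab : b = a := by omega
            have h0 := hpcnew 0
            simp only [hI, hO, if_true, if_false, Nat.add_zero] at h0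
            subst hab
            have he : (fun x => psiM M ((N.subst t M).fire u y1) x + Net.bag 0 {pi} x
                  + Net.bag (b + 1) {po} x)
                = (fun x => psiM M ((N.subst t M).fire u y1) x + Net.bag 0 {pi} x
                    + Net.bag 1 {po} x) + Net.bag b (M.pc pi po).O := by
              funext x
              show _ = _ + Net.bag b {po} x
              simp only [Net.bag, Finset.mem_singleton, Pi.add_apply]
              by_cases hxpo : x = po <;> simp [hxpo] <;> omega
            rw [he] at h0
            have h1 := hpc b b (le_refl b) _ h0
            have h2 := C.po_mono h1
            have hpopi : ¬ po = pi := fun h => C.hpipo h.symm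
            have e1 : (Net.bag (b - b) (M.pc pi po).O) po = 0 := by
              simp [Net.pc, Net.bag]
            rw [e1] at h2
            simp only [psiM, Net.bag, Finset.mem_singleton,
              if_neg C.po_not_MP, if_pos rfl, if_neg hpopi, if_true] at h2
            omega
        · simp only [hO, if_false, Nat.add_zero]
          omega
      -- the new N run
      have hNnew : N.reach (Net.bag k N.I)
          (fun x => phiN N ((N.subst t M).fire u y1) x
            + (a + (if u ∈ M.I then 1 else 0) - (b + (if u ∈ M.O then 1 else 0)))
              * N.post t x) := by
        have hphi : ∀ x, x ∈ N.P → phiN N ((N.subst t M).fire u y1) x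
            = y1 x - (if u ∈ M.I then N.pre t x else 0)
              + (if u ∈ M.O then N.post t x else 0) := by
          intro x hx
          have hxM : x ∉ M.P := C.NP_not_MP hx
          simp only [phiN, Net.fire, if_pos hx, hRpre x, hRpost x,
            if_neg (C.MF_not_into_MP huM hxM), if_neg (C.MF_not_from_MP huM hxM)]
          omega
        by_cases hI : u ∈ M.I
        · have hen : N.enabled t (fun x => phiN N y1 x + (a - b) * N.post t x) := by
            refine ⟨C.ht, Pi.le_def.mpr fun x => ?_⟩
            by_cases hx : x ∈ N.P
            · have h1 := mle hupre x
              rw [hRpre x, if_neg (C.MF_not_into_MP huM (C.NP_not_MP hx)), if_pos hI] at h1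
              simp only [phiN, if_pos hx]
              omega
            · rw [C.preN_notNP C.ht hx]
              omega
          have h2 := hNr.tail ⟨t, hen, rfl⟩
          have he : N.fire t (fun x => phiN N y1 x + (a - b) * N.post t x)
              = (fun x => phiN N ((N.subst t M).fire u y1) x
                + (a + (if u ∈ M.I then 1 else 0) - (b + (if u ∈ M.O then 1 else 0)))
                  * N.post t x) := by
            funext x
            have hfq : N.fire t (fun x => phiN N y1 x + (a - b) * N.post t x) x
                = (phiN N y1 x + (a - b) * N.post t x) - N.pre t x + N.post t x := rfl
            by_cases hx : x ∈ N.P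
            · have h1 := mle hupre x
              rw [hRpre x, if_neg (C.MF_not_into_MP huM (C.NP_not_MP hx)), if_pos hI] at h1
              rw [hfq, hphi x hx]
              simp only [phiN, if_pos hx, hI, if_true]
              by_cases hO : u ∈ M.O
              · simp only [hO, if_true]
                have harith : a + 1 - (b + 1) = a - b := by omega
                rw [harith]
                omega
              · simp only [hO, if_false, Nat.add_zero]
                have harith : a + 1 - b = (a - b) + 1 := by omega
                rw [harith, add_mul, one_mul]
                omega
            · rw [hfq, C.preN_notNP C.ht hx, C.postN_notNP C.ht hx]
              simp only [phiN, if_neg hx]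
              omega
          rw [← he]; exact h2
        · by_cases hO : u ∈ M.O
          · have hba1 : b + 1 ≤ a := by
              simpa only [hI, hO, if_true, if_false, Nat.add_zero] using hdob
            have he : (fun x => phiN N ((N.subst t M).fire u y1) x
                  + (a + (if u ∈ M.I then 1 else 0) - (b + (if u ∈ M.O then 1 else 0)))
                    * N.post t x)
                = (fun x => phiN N y1 x + (a - b) * N.post t x) := by
              funext x
              by_cases hx : x ∈ N.P
              · rw [hphi x hx]
                simp only [phiN, if_pos hx, hI, hO, if_true, if_false,
                  Nat.add_zero, Nat.sub_zero]
                have hco : (a - b) * N.post t x = (a - (b + 1)) * N.post t x + N.post t x := by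
                  have h3 : a - b = (a - (b + 1)) + 1 := by omega
                  rw [h3, add_mul, one_mul]
                omega
              · simp only [phiN, if_neg hx, C.postN_notNP C.ht hx, Nat.mul_zero]
            rw [he]; exact hNr
          · have he : (fun x => phiN N ((N.subst t M).fire u y1) x
                  + (a + (if u ∈ M.I then 1 else 0) - (b + (if u ∈ M.O then 1 else 0)))
                    * N.post t x)
                = (fun x => phiN N y1 x + (a - b) * N.post t x) := by
              funext x
              by_cases hx : x ∈ N.P
              · rw [hphi x hx]
                simp only [phiN, if_pos hx, hI, hO, if_false,
                  Nat.add_zero, Nat.sub_zero]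
              · simp only [phiN, if_neg hx, C.postN_notNP C.ht hx, Nat.mul_zero]
            rw [he]; exact hNr
      exact ⟨a + (if u ∈ M.I then 1 else 0), b + (if u ∈ M.O then 1 else 0),
        hdob, hpcnew, hNnew⟩

end SCtx

namespace SCtx

variable {N M : Net} {t pi po : ℕ} (C : SCtx N M t pi po)
include C

lemma substI : (N.subst t M).I = N.I := by
  have h : t ∉ N.I := fun h => Finset.disjoint_left.mp C.hNp.1 (C.hNI h) C.ht
  simp [Net.subst, h]

lemma substO : (N.subst t M).O = N.O := by
  have h : t ∉ N.O := fun h => Finset.disjoint_left.mp C.hNp.1 (C.hNO h) C.ht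
  simp [Net.subst, h]

omit C in
lemma bag_pi_pi {n : ℕ} : Net.bag n ({pi} : Finset ℕ) pi = n := by simp [Net.bag]
omit C in
lemma bag_po_po {n : ℕ} : Net.bag n ({po} : Finset ℕ) po = n := by simp [Net.bag]

lemma transferN (hpc1 : (M.pc pi po).reach (Net.bag 1 {pi}) (Net.bag 1 {po}))
    {μ₁ μ₂ : Net.Marking} (h : N.reach μ₁ μ₂) :
    ∀ y₁ : Net.Marking, (∀ x ∈ N.P, y₁ x = μ₁ x) → (∀ x ∈ M.P, y₁ x = 0) →
    ∃ y₂ : Net.Marking, (N.subst t M).reach y₁ y₂ ∧ (∀ x ∈ N.P, y₂ x = μ₂ x) ∧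
      (∀ x ∈ M.P, y₂ x = 0) ∧ (∀ x, x ∉ N.P → x ∉ M.P → y₂ x = y₁ x) := by
  induction h with
  | refl => exact fun y₁ h1 h2 => ⟨y₁, Relation.ReflTransGen.refl, h1, h2, fun _ _ _ => rfl⟩
  | @tail μmid μ₂ hmid hstep ih =>
    intro y₁ h1 h2
    obtain ⟨ymid, hr, hN1, hM1, hrest1⟩ := ih y₁ h1 h2
    obtain ⟨u, ⟨huT, hupre⟩, rfl⟩ := hstep
    have hpre_le : ∀ x, N.pre u x ≤ ymid x := by
      intro x
      by_cases hx : x ∈ N.P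
      · rw [hN1 x hx]; exact mle hupre x
      · rw [C.preN_notNP huT hx]; omega
    by_cases hut : u = t
    · subst hut
      set z : Net.Marking := fun x => if x ∈ M.P then 0 else ymid x - N.pre u x with hz
      have hstart : Phi N M u pi po (Net.bag 1 {pi}) z = ymid := by
        funext x
        simp only [Phi, hz]
        by_cases hx : x ∈ M.P
        · have hxpi : ¬ x = pi := fun hh => C.hpiM (hh ▸ C.MP_nodes hx)
          rw [if_pos hx, hM1 x hx]
          simp [Net.bag, hxpi]
        · have hpopi : ¬ (po : ℕ) = pi := fun hh => C.hpipo hh.symm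
          have e1 : Net.bag 1 ({pi} : Finset ℕ) po = 0 := by simp [Net.bag, hpopi]
          rw [if_neg hx, bag_pi_pi, e1]
          have := hpre_le x
          simp only [if_neg hx]
          omega
      have hrun := C.sim_reach hpc1 z
      rw [hstart] at hrun
      refine ⟨Phi N M u pi po (Net.bag 1 {po}) z, hr.trans hrun, ?_, ?_, ?_⟩
      · intro x hx
        have hxM : x ∉ M.P := C.NP_not_MP hx
        have hxpo : ¬ (pi : ℕ) = po := C.hpipo
        have e1 : Net.bag 1 ({po} : Finset ℕ) pi = 0 := by simp [Net.bag, hxpo]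
        simp only [Phi, hz, if_neg hxM, e1, bag_po_po]
        have hfire : N.fire u μmid x = μmid x - N.pre u x + N.post u x := rfl
        rw [hfire, ← hN1 x hx]
        have := hpre_le x
        omega
      · intro x hx
        have hxpo : ¬ x = po := fun hh => C.hpoM (hh ▸ C.MP_nodes hx)
        simp only [Phi, if_pos hx]
        simp [Net.bag, hxpo]
      · intro x hx1 hx2
        have hxpo : ¬ (pi : ℕ) = po := C.hpipo
        have e1 : Net.bag 1 ({po} : Finset ℕ) pi = 0 := by simp [Net.bag, hxpo]
        simp only [Phi, hz, if_neg hx2, e1, bag_po_po, C.preN_notNP huT hx1,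
          C.postN_notNP huT hx1]
        have := hrest1 x hx1 hx2
        omega
    · have huT' : u ∈ N.T := huT
      have hen : (N.subst t M).enabled u ymid := by
        refine ⟨Finset.mem_union_left _ (Finset.mem_erase.mpr ⟨hut, huT'⟩),
          Pi.le_def.mpr fun x => ?_⟩
        rw [C.preR_N huT' hut]
        exact hpre_le x
      refine ⟨(N.subst t M).fire u ymid, hr.tail ⟨u, hen, rfl⟩, ?_, ?_, ?_⟩
      · intro x hx
        have hfR : (N.subst t M).fire u ymid x
            = ymid x - (N.subst t M).pre u x + (N.subst t M).post u x := rfl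
        have hfN : N.fire u μmid x = μmid x - N.pre u x + N.post u x := rfl
        rw [hfR, hfN, C.preR_N huT' hut, C.postR_N huT' hut, hN1 x hx]
      · intro x hx
        have hfR : (N.subst t M).fire u ymid x
            = ymid x - (N.subst t M).pre u x + (N.subst t M).post u x := rfl
        rw [hfR, C.preR_N huT' hut, C.postR_N huT' hut, hM1 x hx,
          C.preN_MP huT' hx, C.postN_MP huT' hx]
      · intro x hx1 hx2
        have hfR : (N.subst t M).fire u ymid x
            = ymid x - (N.subst t M).pre u x + (N.subst t M).post u x := rfl
        rw [hfR, C.preR_N huT' hut, C.postR_N huT' hut, C.preN_notNP huT' hx1,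
          C.postN_notNP huT' hx1, hrest1 x hx1 hx2]
        omega

lemma inv_supp {k : ℕ} {w : Net.Marking} (h : (N.subst t M).reach (Net.bag k N.I) w) :
    ∀ x, x ∉ N.P → x ∉ M.P → w x = 0 := by
  induction h with
  | refl =>
    intro x hx1 _
    have hxI : x ∉ N.I := fun hh => hx1 (C.hNI hh)
    simp [Net.bag, hxI]
  | @tail y1 y2 hmid hstep ih =>
    intro x hx1 hx2
    obtain ⟨u, ⟨huT, _⟩, rfl⟩ := hstep
    have hfR : (N.subst t M).fire u y1 x
        = y1 x - (N.subst t M).pre u x + (N.subst t M).post u x := rfl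
    have hy1 := ih x hx1 hx2
    rcases Finset.mem_union.mp huT with huN | huM
    · obtain ⟨hut, huT'⟩ := Finset.mem_erase.mp huN
      rw [hfR, C.preR_N huT' hut, C.postR_N huT' hut, C.preN_notNP huT' hx1,
        C.postN_notNP huT' hx1, hy1]
    · rw [hfR, C.preR_M huM x, C.postR_M huM x,
        if_neg (C.MF_not_into_MP huM hx2), if_neg (C.MF_not_from_MP huM hx2),
        C.preN_notNP C.ht hx1, C.postN_notNP C.ht hx1, hy1]
      simp

end SCtx

end SubstAux

section MainProof
open Net

theorem stmt16 (N M : Net) (t : ℕ) (hN : N.IsPWF) (hM : M.IsTWF)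
    (hd : Disjoint N.nodes M.nodes) (ht : t ∈ N.T)
    (hsN : N.subSound) (hsM : M.tSubSound) : (N.subst t M).subSound := by
  obtain ⟨hNp, hNI, hNO, -, -, -⟩ := hN
  obtain ⟨hMp, hMI, hMO, -, -, -⟩ := hM
  set s := (N.nodes ∪ M.nodes).sup id with hs
  have hfresh : ∀ x ∈ N.nodes ∪ M.nodes, x ≤ s := fun x hx => Finset.le_sup (f := id) hx
  have hpiN : s + 1 ∉ N.nodes := fun h => by
    have := hfresh _ (Finset.mem_union_left _ h); omega
  have hpoN : s + 2 ∉ N.nodes := fun h => by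
    have := hfresh _ (Finset.mem_union_left _ h); omega
  have hpiM : s + 1 ∉ M.nodes := fun h => by
    have := hfresh _ (Finset.mem_union_right _ h); omega
  have hpoM : s + 2 ∉ M.nodes := fun h => by
    have := hfresh _ (Finset.mem_union_right _ h); omega
  have C : SCtx N M t (s + 1) (s + 2) :=
    ⟨hNp, hNI, hNO, hMp, hMI, hMO, hd, ht, hpiN, hpoN, hpiM, hpoM, by omega⟩
  have hpc : (M.pc (s + 1) (s + 2)).subSound := hsM _ _ hpiM hpoM (by omega)
  intro k k' hk m hreach
  rw [C.substI] at hreach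
  rw [C.substO] at hreach ⊢
  obtain ⟨a, b, hba, hpcrun, hNrun⟩ := C.proj hpc hreach
  -- the cleanup run in the place completion
  have hψ : (fun x => psiM M (m + Net.bag k' N.O) x + Net.bag 0 {s + 1} x
        + Net.bag b {s + 2} x)
      = psiM M m + Net.bag b (M.pc (s + 1) (s + 2)).O := by
    funext x
    show _ = psiM M m x + Net.bag b {s + 2} x
    simp only [psiM, Pi.add_apply]
    by_cases hx : x ∈ M.P
    · have hxO : x ∉ N.O := fun hh => C.nm (C.NP_nodes (C.hNO hh)) (C.MP_nodes hx)
      simp [Net.bag, hx, hxO]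
    · simp [Net.bag, hx]
  have h0 : (M.pc (s + 1) (s + 2)).reach (Net.bag a {s + 1})
      (psiM M m + Net.bag b (M.pc (s + 1) (s + 2)).O) := by
    have h0' := hpcrun 0
    rw [hψ] at h0'
    exact h0'
  have hclean := hpc a b hba (psiM M m) h0
  set z : Net.Marking := fun x => if x ∈ M.P then 0 else m x with hzdef
  have hst : Phi N M t (s + 1) (s + 2) (psiM M m) z = m := by
    funext x
    simp only [Phi, psiM, hzdef]
    by_cases hx : x ∈ M.P
    · simp [hx]
    · simp [hx, if_neg C.pi_not_MP, if_neg C.po_not_MP]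
  have hclean' := C.sim_reach hclean z
  rw [hst] at hclean'
  -- the remaining N run
  have hφ : (fun x => phiN N (m + Net.bag k' N.O) x + (a - b) * N.post t x)
      = (fun x => phiN N m x + (a - b) * N.post t x) + Net.bag k' N.O := by
    funext x
    simp only [phiN, Pi.add_apply]
    by_cases hx : x ∈ N.P
    · simp only [if_pos hx]
      omega
    · have hxO : x ∉ N.O := fun hh => hx (C.hNO hh)
      simp [Net.bag, hx, hxO]
  rw [hφ] at hNrun
  have hNfin := hsN k k' hk _ hNrun
  -- the single-token run of the place completion
  have hone : Net.bag 1 {s + 1} + Net.bag 0 (M.pc (s + 1) (s + 2)).O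
      = Net.bag 1 ({s + 1} : Finset ℕ) := by
    funext x
    show _ + Net.bag 0 {s + 2} x = _
    simp [Net.bag]
  have hpc1 : (M.pc (s + 1) (s + 2)).reach (Net.bag 1 {s + 1}) (Net.bag 1 {s + 2}) := by
    have h1 := hpc 1 0 (by omega) (Net.bag 1 {s + 1})
      (by rw [hone]; exact Relation.ReflTransGen.refl)
    exact h1
  -- transfer the N run into the substituted net
  have hne : ¬ (s + 1 : ℕ) = s + 2 := by omega
  have hside1 : ∀ x ∈ N.P,
      Phi N M t (s + 1) (s + 2) (Net.bag (a - b) (M.pc (s + 1) (s + 2)).O) z x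
        = phiN N m x + (a - b) * N.post t x := by
    intro x hx
    have hxM : x ∉ M.P := C.NP_not_MP hx
    have e1 : Net.bag (a - b) (M.pc (s + 1) (s + 2)).O (s + 1) = 0 := by
      simp [Net.pc, Net.bag, hne]
    have e2 : Net.bag (a - b) (M.pc (s + 1) (s + 2)).O (s + 2) = a - b := by
      simp [Net.pc, Net.bag]
    simp only [Phi, hzdef, if_neg hxM, e1, e2, phiN, if_pos hx]
    omega
  have hside2 : ∀ x ∈ M.P,
      Phi N M t (s + 1) (s + 2) (Net.bag (a - b) (M.pc (s + 1) (s + 2)).O) z x = 0 := by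
    intro x hx
    have hxpo : ¬ x = s + 2 := fun hh => C.hpoM (hh ▸ C.MP_nodes hx)
    simp only [Phi, if_pos hx]
    simp [Net.pc, Net.bag, hxpo]
  obtain ⟨y₂, hr2, hN2, hM2, hrest2⟩ := C.transferN hpc1 hNfin
    (Phi N M t (s + 1) (s + 2) (Net.bag (a - b) (M.pc (s + 1) (s + 2)).O) z) hside1 hside2
  · have hm0 : ∀ x, x ∉ N.P → x ∉ M.P → m x = 0 := by
      intro x hx1 hx2
      have h3 := C.inv_supp hreach x hx1 hx2
      simp only [Pi.add_apply] at h3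
      omega
    have hy2 : y₂ = Net.bag (k - k') N.O := by
      funext x
      by_cases hx : x ∈ N.P
      · rw [hN2 x hx]
      · have hxO : x ∉ N.O := fun hh => hx (C.hNO hh)
        by_cases hx2 : x ∈ M.P
        · rw [hM2 x hx2]
          simp [Net.bag, hxO]
        · rw [hrest2 x hx hx2]
          simp only [Phi, hzdef, if_neg hx2, hm0 x hx hx2, C.preN_notNP C.ht hx,
            C.postN_notNP C.ht hx]
          simp [Net.bag, hxO]
    rw [← hy2]
    exact hclean'.trans hr2

end MainProof
end

section
/- Every tOR net is substitution-sound. -/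
/-!
In the place completion of a tOR net every transition has exactly one input and one output
place, so a firing moves a single token from one place to another: the number of tokens on
places is invariant and nothing changes off the places. Connectedness lets every place reach
the output place, so the tokens left after removing `k'` from the output can be walked there
one at a time.
-/

lemma Finset.exists_ite_union_eq_singleton {α : Type*} [DecidableEq α] {b : Prop}
    [Decidable b] {S : Finset α} (x : α) (h : (b ∧ S.card = 0) ∨ (¬b ∧ S.card = 1)) :
    ∃ p, (if b then {x} else ∅) ∪ S = {p} := by
  rcases h with ⟨hb, hS⟩ | ⟨hb, hS⟩
  · exact ⟨x, by simp [hb, Finset.card_eq_zero.mp hS]⟩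
  · simpa [hb] using Finset.card_eq_one.mp hS

namespace Net

section Basic

variable {N : Net}

@[simp] lemma mem_inEdges {x y : ℕ} : x ∈ N.inEdges y ↔ (x, y) ∈ N.F := by
  simp [inEdges]

@[simp] lemma mem_outEdges {x y : ℕ} : y ∈ N.outEdges x ↔ (x, y) ∈ N.F := by
  simp [outEdges]

lemma IsPetri.src_mem_P (hN : N.IsPetri) {x y : ℕ} (he : (x, y) ∈ N.F)
    (hy : y ∈ N.T) : x ∈ N.P :=
  (hN.2 _ he).elim And.left fun h => absurd hy (Finset.disjoint_left.mp hN.1 h.2)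

lemma IsPetri.tgt_mem_P (hN : N.IsPetri) {x y : ℕ} (he : (x, y) ∈ N.F)
    (hx : x ∈ N.T) : y ∈ N.P :=
  (hN.2 _ he).elim (fun h => absurd hx (Finset.disjoint_left.mp hN.1 h.1)) And.right

lemma IsPetri.tgt_mem_T (hN : N.IsPetri) {x y : ℕ} (he : (x, y) ∈ N.F)
    (hx : x ∈ N.P) : y ∈ N.T :=
  (hN.2 _ he).elim And.right fun h => absurd h.1 (Finset.disjoint_left.mp hN.1 hx)

lemma sum_bag_singleton (s : Finset ℕ) (k p : ℕ) :
    ∑ q ∈ s, bag k {p} q = if p ∈ s then k else 0 := by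
  simp [bag, Finset.sum_ite_eq']

lemma bag_add_bag (a b : ℕ) (S : Finset ℕ) : bag a S + bag b S = bag (a + b) S := by
  funext q
  simp only [bag, Pi.add_apply]
  split_ifs <;> rfl

lemma pre_eq_bag_of_inEdges_eq {t p : ℕ} (h : N.inEdges t = {p}) : N.pre t = bag 1 {p} := by
  funext q
  simp only [pre, bag, ← mem_inEdges, h]

lemma post_eq_bag_of_outEdges_eq {t q : ℕ} (h : N.outEdges t = {q}) :
    N.post t = bag 1 {q} := by
  funext r
  simp only [post, bag, ← mem_outEdges, h]

lemma fire_add_bag {t p q : ℕ} (hpre : N.pre t = bag 1 {p}) (hpost : N.post t = bag 1 {q})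
    (m : Marking) : N.fire t (m + bag 1 {p}) = m + bag 1 {q} := by
  funext r
  simp only [fire, hpre, hpost, Pi.add_apply, bag, Finset.mem_singleton]
  split_ifs <;> omega

lemma stepRel.add_right {m m' : Marking} (h : N.stepRel m m') (c : Marking) :
    N.stepRel (m + c) (m' + c) := by
  obtain ⟨t, ⟨htT, hle⟩, rfl⟩ := h
  refine ⟨t, ⟨htT, hle.trans le_self_add⟩, ?_⟩
  funext p
  have := hle p
  simp only [fire, Pi.add_apply] at this ⊢
  omega

lemma reach.add_right {m m' : Marking} (h : N.reach m m') (c : Marking) :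
    N.reach (m + c) (m' + c) :=
  Relation.ReflTransGen.lift (· + c) (fun _ _ (hs : N.stepRel _ _) => hs.add_right c) _ _ h

end Basic

def IsStateMachine (M : Net) : Prop :=
  M.IsPetri ∧ ∀ t ∈ M.T, ∃ p q, M.inEdges t = {p} ∧ M.outEdges t = {q}

namespace IsStateMachine

variable {M : Net}

lemma exists_of_stepRel (hM : M.IsStateMachine) {m m' : Marking} (h : M.stepRel m m') :
    ∃ p ∈ M.P, ∃ q ∈ M.P, ∃ m₀ : Marking,
      m = m₀ + bag 1 {p} ∧ m' = m₀ + bag 1 {q} := by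
  obtain ⟨t, ⟨htT, hle⟩, rfl⟩ := h
  obtain ⟨p, q, hin, hout⟩ := hM.2 t htT
  have hpre := pre_eq_bag_of_inEdges_eq hin
  have hpost := post_eq_bag_of_outEdges_eq hout
  have hp : p ∈ M.P := hM.1.src_mem_P (mem_inEdges.mp (by simp [hin])) htT
  have hq : q ∈ M.P := hM.1.tgt_mem_P (mem_outEdges.mp (by simp [hout])) htT
  have hm : m = (m - bag 1 {p}) + bag 1 {p} := (tsub_add_cancel_of_le (hpre ▸ hle)).symm
  exact ⟨p, hp, q, hq, m - bag 1 {p}, hm, by rw [hm, fire_add_bag hpre hpost, ← hm]⟩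

lemma reach_apply_of_notMem (hM : M.IsStateMachine) {m m' : Marking} (h : M.reach m m')
    {r : ℕ} (hr : r ∉ M.P) : m' r = m r := by
  induction h with
  | refl => rfl
  | tail _ hs ih =>
    obtain ⟨p, hp, q, hq, m₀, rfl, rfl⟩ := hM.exists_of_stepRel hs
    have hrp : r ≠ p := fun h => hr (h ▸ hp)
    have hrq : r ≠ q := fun h => hr (h ▸ hq)
    simpa [bag, hrp, hrq] using ih

lemma reach_sum_eq (hM : M.IsStateMachine) {m m' : Marking} (h : M.reach m m') :
    ∑ p ∈ M.P, m' p = ∑ p ∈ M.P, m p := by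
  induction h with
  | refl => rfl
  | tail _ hs ih =>
    obtain ⟨p, hp, q, hq, m₀, rfl, rfl⟩ := hM.exists_of_stepRel hs
    simpa [Finset.sum_add_distrib, sum_bag_singleton, hp, hq] using ih

lemma stepRel_add_bag (hM : M.IsStateMachine) {p t q : ℕ} (hpt : (p, t) ∈ M.F)
    (htq : (t, q) ∈ M.F) (ht : t ∈ M.T) (m : Marking) :
    M.stepRel (m + bag 1 {p}) (m + bag 1 {q}) := by
  obtain ⟨p', q', hin, hout⟩ := hM.2 t ht
  have hp : p = p' := by simpa [hin] using mem_inEdges.mpr hpt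
  have hq : q = q' := by simpa [hout] using mem_outEdges.mpr htq
  subst hp hq
  have hpre := pre_eq_bag_of_inEdges_eq hin
  have hpost := post_eq_bag_of_outEdges_eq hout
  exact ⟨t, ⟨ht, hpre ▸ le_add_self⟩, (fire_add_bag hpre hpost m).symm⟩

lemma reach_add_bag_of_reflTransGen (hM : M.IsStateMachine) {x y : ℕ}
    (hxy : Relation.ReflTransGen M.edge x y) (hx : x ∈ M.P) (hy : y ∈ M.P) (m : Marking) :
    M.reach (m + bag 1 {x}) (m + bag 1 {y}) := by
  suffices ∀ z, Relation.ReflTransGen M.edge z y →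
      (z ∈ M.P → M.reach (m + bag 1 {z}) (m + bag 1 {y})) ∧
      (z ∈ M.T → ∀ p, (p, z) ∈ M.F → M.reach (m + bag 1 {p}) (m + bag 1 {y})) from
    (this x hxy).1 hx
  intro z hz
  induction hz using Relation.ReflTransGen.head_induction_on with
  | refl =>
    exact ⟨fun _ => .refl, fun hyT => absurd hyT (Finset.disjoint_left.mp hM.1.1 hy)⟩
  | @head z w hzw _ ih =>
    refine ⟨fun hzP => ih.2 (hM.1.tgt_mem_T hzw hzP) z hzw, fun hzT p hpz => ?_⟩
    exact .head (hM.stepRel_add_bag hpz hzw hzT m) (ih.1 (hM.1.tgt_mem_P hzw hzT))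

lemma reach_bag_of_forall_reflTransGen (hM : M.IsStateMachine) {o : ℕ} (ho : o ∈ M.P)
    (hpath : ∀ p ∈ M.P, Relation.ReflTransGen M.edge p o) :
    ∀ (n : ℕ) (m : Marking), (∀ r ∉ M.P, m r = 0) → ∑ p ∈ M.P, m p = n →
      M.reach m (bag n {o}) := by
  intro n
  induction n with
  | zero =>
    intro m hout hsum
    have : m = bag 0 {o} := by
      funext r
      by_cases hr : r ∈ M.P
      · simpa [bag] using (Finset.sum_eq_zero_iff.mp hsum) r hr
      · simpa [bag] using hout r hr
    exact this ▸ .refl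
  | succ n ih =>
    intro m hout hsum
    obtain ⟨p, hp, hmp⟩ : ∃ p ∈ M.P, m p ≠ 0 := by
      by_contra! h
      rw [Finset.sum_eq_zero h] at hsum
      omega
    have hm : m = (m - bag 1 {p}) + bag 1 {p} := by
      refine (tsub_add_cancel_of_le fun r => ?_).symm
      by_cases hr : r = p
      · subst hr; simpa [bag] using Nat.one_le_iff_ne_zero.mpr hmp
      · simp [bag, hr]
    set m₀ := m - bag 1 {p}
    have hout₀ : ∀ r ∉ M.P, m₀ r = 0 := fun r hr => by simp [m₀, hout r hr]
    have hsum₀ : ∑ r ∈ M.P, m₀ r = n := by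
      rw [hm] at hsum
      simpa [Finset.sum_add_distrib, sum_bag_singleton, hp] using hsum
    rw [hm, ← bag_add_bag]
    exact ((ih m₀ hout₀ hsum₀).add_right _).trans
      (hM.reach_add_bag_of_reflTransGen (hpath p hp) hp ho _)

theorem subSound (hM : M.IsStateMachine) {i o : ℕ} (hI : M.I = {i}) (hO : M.O = {o})
    (hi : i ∈ M.P) (ho : o ∈ M.P) (hpath : ∀ p ∈ M.P, Relation.ReflTransGen M.edge p o) :
    M.subSound := by
  intro k k' hk m h
  rw [hI, hO] at h
  rw [hO]
  have hout : ∀ r ∉ M.P, m r = 0 := fun r hr => by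
    have hri : r ≠ i := fun h => hr (h ▸ hi)
    have hro : r ≠ o := fun h => hr (h ▸ ho)
    simpa [bag, hri, hro] using hM.reach_apply_of_notMem h hr
  have hsum : ∑ p ∈ M.P, m p + k' = k := by
    simpa [Finset.sum_add_distrib, sum_bag_singleton, hi, ho] using hM.reach_sum_eq h
  exact hM.reach_bag_of_forall_reflTransGen ho hpath _ m hout (by omega)

end IsStateMachine

section PlaceCompletion

variable {N : Net} {pi po : ℕ}

lemma mem_pc_F {x y : ℕ} : (x, y) ∈ (N.pc pi po).F ↔
    (x = pi ∧ y ∈ N.I) ∨ (y = po ∧ x ∈ N.O) ∨ (x, y) ∈ N.F := by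
  simp only [pc, Finset.mem_union, Finset.mem_image, Prod.mk.injEq]
  grind

lemma pc_isPetri (hN : N.IsPetri) (hI : N.I ⊆ N.T) (hO : N.O ⊆ N.T) (hpi : pi ∉ N.T)
    (hpo : po ∉ N.T) : (N.pc pi po).IsPetri := by
  refine ⟨?_, fun ⟨x, y⟩ he => ?_⟩
  · simp only [pc, Finset.disjoint_insert_left]
    exact ⟨hpi, hpo, hN.1⟩
  · simp only [pc, Finset.mem_insert]
    rcases mem_pc_F.mp he with ⟨rfl, hy⟩ | ⟨rfl, hx⟩ | he
    · exact .inl ⟨.inl rfl, hI hy⟩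
    · exact .inr ⟨hO hx, .inr (.inl rfl)⟩
    · rcases hN.2 _ he with ⟨hx, hy⟩ | ⟨hx, hy⟩
      · exact .inl ⟨.inr (.inr hx), hy⟩
      · exact .inr ⟨hx, .inr (.inr hy)⟩

lemma pc_inEdges {t : ℕ} (ht : t ≠ po) :
    (N.pc pi po).inEdges t = (if t ∈ N.I then {pi} else ∅) ∪ N.inEdges t := by
  ext q
  split_ifs <;> simp [mem_pc_F, *]

lemma pc_outEdges {t : ℕ} (ht : t ≠ pi) :
    (N.pc pi po).outEdges t = (if t ∈ N.O then {po} else ∅) ∪ N.outEdges t := by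
  ext q
  split_ifs <;> simp [mem_pc_F, *]

lemma isStateMachine_pc (hN : N.IsTWF) (hOR : N.IsOR) (hpi : pi ∉ N.T) (hpo : po ∉ N.T) :
    (N.pc pi po).IsStateMachine := by
  obtain ⟨hPetri, hI, hO, -⟩ := hN
  refine ⟨pc_isPetri hPetri hI hO hpi hpo, fun t ht => ?_⟩
  have htpi : t ≠ pi := fun h => hpi (h ▸ ht)
  have htpo : t ≠ po := fun h => hpo (h ▸ ht)
  obtain ⟨p, hp⟩ := Finset.exists_ite_union_eq_singleton pi (hOR t ht).1
  obtain ⟨q, hq⟩ := Finset.exists_ite_union_eq_singleton po (hOR t ht).2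
  exact ⟨p, q, (pc_inEdges htpo).trans hp, (pc_outEdges htpi).trans hq⟩

lemma pc_reflTransGen_edge_po (hN : N.IsTWF) :
    ∀ p ∈ (N.pc pi po).P, Relation.ReflTransGen (N.pc pi po).edge p po := by
  obtain ⟨-, hI, -, ⟨i, hi⟩, -, -, hconn⟩ := hN
  have hlift : ∀ {a b}, N.pathReach a b → Relation.ReflTransGen (N.pc pi po).edge a b :=
    Relation.ReflTransGen.mono (fun _ _ hab => mem_pc_F.mpr (.inr (.inr hab))) _ _
  have hnode : ∀ x ∈ N.nodes, Relation.ReflTransGen (N.pc pi po).edge x po := fun x hx => by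
    obtain ⟨o, ho, hxo⟩ := hconn x hx
    exact (hlift hxo).tail (mem_pc_F.mpr (.inr (.inl ⟨rfl, ho⟩)))
  intro p hp
  simp only [pc, Finset.mem_insert] at hp
  rcases hp with rfl | rfl | hp
  · exact .head (mem_pc_F.mpr (.inl ⟨rfl, hi⟩)) (hnode i (Finset.mem_union_right _ (hI hi)))
  · exact .refl
  · exact hnode p (Finset.mem_union_left _ hp)

end PlaceCompletion

end Net

theorem stmt19 (N : Net) (hN : N.IsTWF) (hOR : N.IsOR) : N.tSubSound := by
  intro pi po hpi hpo _
  have hT : ∀ {x}, x ∉ N.nodes → x ∉ N.T := fun h hx => h (Finset.mem_union_right _ hx)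
  exact (Net.isStateMachine_pc hN hOR (hT hpi) (hT hpo)).subSound rfl rfl (by simp [Net.pc])
    (by simp [Net.pc]) (Net.pc_reflTransGen_edge_po hN)
end
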